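/- Let D be a strong digraph with an SVMC-coloring Γ, and suppose that for every vertex v of D there exists a vertex x with directed distance d(v,x) ≥ 3. Then the set of vertices whose color class under Γ is non-singular (has at least two vertices) is a total absorbing set of D, i.e., every vertex of D has an out-neighbor lying in a non-singular color class. -/

import Mathlib

namespace SVMC

variable {V : Type*}

/-- `IsWalk A u v l` : `u :: l` is a directed walk from `u` to `v` in the digraph
with arc relation `A`; its length (number of arcs) is `l.length`. -/
def IsWalk (A : V → V → Prop) (u v : V) (l : List V) : Prop :=
  List.Chain A u l ∧ (u :: l).getLast (List.cons_ne_nil u l) = v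

/-- A directed path: a walk with no repeated vertices. -/
def IsPath (A : V → V → Prop) (u v : V) (l : List V) : Prop :=
  IsWalk A u v l ∧ (u :: l).Nodup

def Reachable (A : V → V → Prop) (u v : V) : Prop := ∃ l, IsWalk A u v l

/-- A digraph is strong if every vertex is reachable from every other vertex. -/
def Strong (A : V → V → Prop) : Prop := ∀ u v : V, Reachable A u v

/-- Directed distance: the minimum length of a directed walk from `u` to `v`. -/
noncomputable def dist (A : V → V → Prop) (u v : V) : ℕ :=
  sInf {n | ∃ l, IsWalk A u v l ∧ l.length = n}

/-- Diameter: maximum directed distance over ordered pairs of vertices. -/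
noncomputable def diam (A : V → V → Prop) : ℕ :=
  sSup {d | ∃ u v : V, dist A u v = d}

/-- The internal vertices of the walk `u :: l` (ending at the last entry of `l`)
are `l.dropLast`.  `MonoInternal Γ l` says they all receive one color. -/
def MonoInternal (Γ : V → ℕ) (l : List V) : Prop :=
  ∃ c, ∀ x ∈ l.dropLast, Γ x = c

/-- A strong vertex-monochromatic connection coloring. -/
def IsSVMC (A : V → V → Prop) (Γ : V → ℕ) : Prop :=
  ∀ u v : V, ∃ l, IsPath A u v l ∧ MonoInternal Γ l

/-- The number of colors used by a vertex coloring. -/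
noncomputable def colorCount (Γ : V → ℕ) : ℕ := (Set.range Γ).ncard

/-- The strong vertex-monochromatic connection number. -/
noncomputable def smcv (A : V → V → Prop) : ℕ :=
  sSup {k | ∃ Γ : V → ℕ, IsSVMC A Γ ∧ colorCount Γ = k}

def TotalAbsorbing (A : V → V → Prop) (S : Set V) : Prop := ∀ v : V, ∃ w ∈ S, A v w

def TotalDominating (A : V → V → Prop) (S : Set V) : Prop := ∀ v : V, ∃ w ∈ S, A w v

def Absorbing (A : V → V → Prop) (S : Set V) : Prop := ∀ v ∉ S, ∃ w ∈ S, A v w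

def Dominating (A : V → V → Prop) (S : Set V) : Prop := ∀ v ∉ S, ∃ w ∈ S, A w v

/-- A walk all of whose vertices lie in `S`. -/
def IsWalkIn (A : V → V → Prop) (S : Set V) (u v : V) (l : List V) : Prop :=
  IsWalk A u v l ∧ ∀ x ∈ u :: l, x ∈ S

/-- The subdigraph induced by `S` is strongly connected. -/
def StrongOn (A : V → V → Prop) (S : Set V) : Prop :=
  ∀ u ∈ S, ∀ v ∈ S, ∃ l, IsWalkIn A S u v l

/-- `Ω_v(D)`: minimum order of a strong, absorbing and dominating subdigraph. -/
noncomputable def Omegav (A : V → V → Prop) : ℕ :=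
  sInf {k | ∃ S : Set V, S.Nonempty ∧ StrongOn A S ∧ Absorbing A S ∧
    Dominating A S ∧ S.ncard = k}

/-- A directed cycle through `u` with vertex list `u :: l` (length `l.length`). -/
def IsCycle (A : V → V → Prop) (u : V) (l : List V) : Prop :=
  l ≠ [] ∧ IsWalk A u u l ∧ (u :: l.dropLast).Nodup

/-- The girth: minimum length of a directed cycle. -/
noncomputable def girth (A : V → V → Prop) : ℕ :=
  sInf {n | ∃ u l, IsCycle A u l ∧ l.length = n}

/-- The arcs of the walk `u :: l` are the consecutive pairs, i.e. `(u :: l).zip l`.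
`MonoArcs` says they all get one color under the arc coloring `ΓA`. -/
def MonoArcs (ΓA : V → V → ℕ) (u : V) (l : List V) : Prop :=
  ∃ c, ∀ p ∈ (u :: l).zip l, ΓA p.1 p.2 = c

/-- A strong monochromatic connection (arc) coloring. -/
def IsSMC (A : V → V → Prop) (ΓA : V → V → ℕ) : Prop :=
  ∀ u v : V, ∃ l, IsPath A u v l ∧ MonoArcs ΓA u l

/-- The number of colors used on the arcs. -/
noncomputable def arcColorCount (A : V → V → Prop) (ΓA : V → V → ℕ) : ℕ :=
  ((fun p : V × V => ΓA p.1 p.2) '' {p : V × V | A p.1 p.2}).ncard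

/-- The strong monochromatic connection number (arc version). -/
noncomputable def smc (A : V → V → Prop) : ℕ :=
  sSup {k | ∃ ΓA : V → V → ℕ, IsSMC A ΓA ∧ arcColorCount A ΓA = k}

/-- The number of arcs of a digraph. -/
noncomputable def arcCount (A : V → V → Prop) : ℕ := {p : V × V | A p.1 p.2}.ncard

/-- `Ω(D)`: minimum number of arcs of a strong spanning subdigraph. -/
noncomputable def Omega (A : V → V → Prop) : ℕ :=
  sInf {k | ∃ B : V → V → Prop, (∀ u v, B u v → A u v) ∧ Strong B ∧ arcCount B = k}

/-- The arcs of `A`, as the vertex type of the line digraph. -/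
def Arc (A : V → V → Prop) : Type _ := {p : V × V // A p.1 p.2}

/-- Adjacency in the line digraph: head of `e` equals tail of `f`. -/
def lineAdj (A : V → V → Prop) : Arc A → Arc A → Prop :=
  fun e f => e.1.2 = f.1.1

/-- `(u,v)` is a bad pair: `N⁺(u) = {v}` and `N⁻(v) = {u}`. -/
def BadPair (A : V → V → Prop) (u v : V) : Prop :=
  {w | A u w} = {v} ∧ {w | A w v} = {u}

/-- A tournament: an orientation of a complete graph. -/
def IsTournament (A : V → V → Prop) : Prop :=
  (∀ v, ¬ A v v) ∧ ∀ u v : V, u ≠ v → (A u v ↔ ¬ A v u)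

/-- The directed 3-cycle on `Fin 3`. -/
def C3Adj : Fin 3 → Fin 3 → Prop := fun i j => j = i + 1

/-- `A` is isomorphic to the directed 3-cycle. -/
def IsoC3 (A : V → V → Prop) : Prop :=
  ∃ e : V ≃ Fin 3, ∀ u v : V, A u v ↔ C3Adj (e u) (e v)

end SVMC

/-! A vertex-monochromatic `(v, x)`-path with `d(v, x) ≥ 3` has at least two internal vertices;
they are distinct and share a colour, and the first one is an out-neighbour of `v`. -/

namespace SVMC

variable {V : Type*}

theorem dist_le_length {A : V → V → Prop} {u v : V} {l : List V} (h : IsWalk A u v l) :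
    dist A u v ≤ l.length :=
  Nat.sInf_le ⟨l, h, rfl⟩

theorem two_le_ncard_colorClass [Finite V] {Γ : V → ℕ} {a b : V} (hab : a ≠ b)
    (h : Γ b = Γ a) : 2 ≤ {x | Γ x = Γ a}.ncard := by
  rw [← Set.ncard_pair hab]
  exact Set.ncard_le_ncard (by simp [Set.insert_subset_iff, h]) (Set.toFinite _)

theorem IsPath.exists_adj_two_le_ncard_colorClass [Finite V] {A : V → V → Prop} {Γ : V → ℕ}
    {u v : V} {l : List V} (hl : IsPath A u v l) (hmono : MonoInternal Γ l)
    (hlen : 3 ≤ l.length) : ∃ w ∈ {w | 2 ≤ {x | Γ x = Γ w}.ncard}, A u w := by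
  obtain ⟨⟨hchain, -⟩, hnodup⟩ := hl
  obtain ⟨c, hc⟩ := hmono
  match l, hlen with
  | a :: b :: _ :: _, _ =>
    have hab : a ≠ b := by
      rintro rfl
      simp at hnodup
    refine ⟨a, two_le_ncard_colorClass hab ?_, List.rel_of_isChain_cons_cons hchain⟩
    rw [hc a (by simp), hc b (by simp)]

end SVMC

theorem totalAbsorbing_of_svmc_general {V : Type*} [Fintype V] (A : V → V → Prop)
    (Γ : V → ℕ) (hΓ : SVMC.IsSVMC A Γ)
    (hd : ∀ v : V, ∃ x : V, 3 ≤ SVMC.dist A v x) :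
    SVMC.TotalAbsorbing A {w : V | 2 ≤ {x : V | Γ x = Γ w}.ncard} := by
  intro v
  obtain ⟨x, hx⟩ := hd v
  obtain ⟨l, hpath, hmono⟩ := hΓ v x
  exact hpath.exists_adj_two_le_ncard_colorClass hmono (hx.trans (SVMC.dist_le_length hpath.1))

/-- if every vertex `v` of a strong digraph has some vertex `x`
with `d(v,x) ≥ 3`, then for an SVMC-coloring the vertices in non-singular
color classes form a total absorbing set. -/
theorem totalAbsorbing_of_svmc {V : Type*} [Fintype V] (A : V → V → Prop)
    (Γ : V → ℕ) (hstrong : SVMC.Strong A) (hΓ : SVMC.IsSVMC A Γ)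
    (hd : ∀ v : V, ∃ x : V, 3 ≤ SVMC.dist A v x) :
    SVMC.TotalAbsorbing A {w : V | 2 ≤ {x : V | Γ x = Γ w}.ncard} :=
  totalAbsorbing_of_svmc_general A Γ hΓ hd
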